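/- arXiv:1907.06716 — 2 statements merged into one kernel-verified Lean document; each statement's English description precedes it below -/
import Mathlib

section
/- Let ℓ be a prime and u an ℓ-integral rational number. Then the formal power series (∏_{n≥1}(1-q^n))^{ℓu} is congruent to (∏_{n≥1}(1-q^{ℓn}))^{u} modulo ℓ, i.e. all coefficients of the difference are divisible by ℓ (as elements of Z_(ℓ)). More generally, (∏(1-q^n))^{ℓ^r u} ≡ (∏(1-q^{ℓn}))^{ℓ^{r-1}u} (mod ℓ^r). -/
open PowerSeries Finset

noncomputable section

/-- Generalized binomial coefficient `α choose n` over `ℚ`. -/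
def qchoose (α : ℚ) (n : ℕ) : ℚ := (∏ i ∈ Finset.range n, (α - i)) / n.factorial

/-- The power series `(1 - q^m)^α`, defined via the binomial series. -/
def oneSubPow (α : ℚ) (m : ℕ) : PowerSeries ℚ :=
  PowerSeries.mk fun k => if m ∣ k then (-1) ^ (k / m) * qchoose α (k / m) else 0

/-- The power series `(∏_{n ≥ 1} (1 - q^{m n}))^α`; the coefficient of `q^N` is
computed from the (stabilizing) finite product of the first `N + 1` factors. -/
def etaPow (α : ℚ) (m : ℕ) : PowerSeries ℚ :=
  PowerSeries.mk fun N =>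
    PowerSeries.coeff N (∏ n ∈ Finset.range (N + 1), oneSubPow α (m * (n + 1)))

/-- `x` is `ℓ^r` times an `ℓ`-integral rational, i.e. `x ∈ ℓ^r ℤ_(ℓ)`. -/
def ModDvd (ℓ : ℕ) (r : ℕ) (x : ℚ) : Prop :=
  ∃ z d : ℤ, ¬ (ℓ : ℤ) ∣ d ∧ (d : ℚ) * x = (ℓ : ℚ) ^ r * (z : ℚ)

/-- `x` is an `ℓ`-integral rational, i.e. `x ∈ ℤ_(ℓ)`. -/
def IsLIntegral (ℓ : ℕ) (x : ℚ) : Prop := ModDvd ℓ 0 x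

/-- Coefficientwise congruence of power series modulo `ℓ^r` (in `ℤ_(ℓ)`). -/
def SeriesCong (ℓ r : ℕ) (f g : PowerSeries ℚ) : Prop :=
  ∀ n : ℕ, ModDvd ℓ r (PowerSeries.coeff n (f - g))

/-- Ramanujan's Delta function `Δ = q ∏_{n ≥ 1} (1 - q^n)^24`. -/
def Delta : PowerSeries ℚ := PowerSeries.X * etaPow 24 1

/-- The fractional partition function: `∑ p_α(n) q^n = (∏_{n ≥ 1}(1 - q^n))^{-α}`. -/
def pfrac (α : ℚ) (n : ℕ) : ℚ := PowerSeries.coeff n (etaPow (-α) 1)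

/-- `τ_k(n)`: the `n`-th coefficient of `Δ^k`. -/
def tau (k : ℕ) (n : ℕ) : ℚ := PowerSeries.coeff n (Delta ^ k)

end

section Helpers

variable {ℓ : ℕ}

lemma int_prime (hℓ : ℓ.Prime) : Prime (ℓ : ℤ) := Nat.prime_iff_prime_int.mp hℓ

lemma li_intCast (hℓ : ℓ.Prime) (z : ℤ) : IsLIntegral ℓ (z : ℚ) :=
  ⟨z, 1, by simpa using (int_prime hℓ).not_dvd_one, by simp⟩

lemma li_natCast (hℓ : ℓ.Prime) (n : ℕ) : IsLIntegral ℓ (n : ℚ) := by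
  simpa using li_intCast hℓ (n : ℤ)

lemma li_zero (hℓ : ℓ.Prime) : IsLIntegral ℓ 0 := by simpa using li_intCast hℓ 0
lemma li_one (hℓ : ℓ.Prime) : IsLIntegral ℓ 1 := by simpa using li_intCast hℓ 1

lemma mdvd_add (hℓ : ℓ.Prime) {r : ℕ} {x y : ℚ} (hx : ModDvd ℓ r x) (hy : ModDvd ℓ r y) :
    ModDvd ℓ r (x + y) := by
  obtain ⟨z1, d1, hd1, h1⟩ := hx
  obtain ⟨z2, d2, hd2, h2⟩ := hy
  refine ⟨z1 * d2 + z2 * d1, d1 * d2, fun h => ?_, ?_⟩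
  · rcases (int_prime hℓ).dvd_mul.mp h with h | h
    exacts [hd1 h, hd2 h]
  · push_cast
    calc (d1:ℚ) * d2 * (x + y) = (d2:ℚ) * ((d1:ℚ)*x) + (d1:ℚ) * ((d2:ℚ)*y) := by ring
    _ = (d2:ℚ) * ((ℓ:ℚ)^r * z1) + (d1:ℚ) * ((ℓ:ℚ)^r * z2) := by rw [h1, h2]
    _ = (ℓ:ℚ)^r * ((z1:ℚ) * d2 + (z2:ℚ) * d1) := by ring

lemma mdvd_mul_li (hℓ : ℓ.Prime) {r : ℕ} {x y : ℚ} (hx : ModDvd ℓ r x)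
    (hy : IsLIntegral ℓ y) : ModDvd ℓ r (x * y) := by
  obtain ⟨z1, d1, hd1, h1⟩ := hx
  obtain ⟨z2, d2, hd2, h2⟩ := hy
  refine ⟨z1 * z2, d1 * d2, fun h => ?_, ?_⟩
  · rcases (int_prime hℓ).dvd_mul.mp h with h | h
    exacts [hd1 h, hd2 h]
  · push_cast
    simp only [pow_zero, one_mul] at h2
    calc (d1:ℚ) * d2 * (x * y) = ((d1:ℚ) * x) * ((d2:ℚ) * y) := by ring
    _ = ((ℓ:ℚ)^r * z1) * z2 := by rw [h1, h2]
    _ = (ℓ:ℚ)^r * (z1 * z2) := by ring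

lemma li_add (hℓ : ℓ.Prime) {x y : ℚ} (hx : IsLIntegral ℓ x) (hy : IsLIntegral ℓ y) :
    IsLIntegral ℓ (x + y) := mdvd_add hℓ hx hy

lemma li_mul (hℓ : ℓ.Prime) {x y : ℚ} (hx : IsLIntegral ℓ x) (hy : IsLIntegral ℓ y) :
    IsLIntegral ℓ (x * y) := mdvd_mul_li hℓ hx hy

lemma mdvd_zero (hℓ : ℓ.Prime) (r : ℕ) : ModDvd ℓ r 0 :=
  ⟨0, 1, by simpa using (int_prime hℓ).not_dvd_one, by simp⟩

lemma mdvd_sum (hℓ : ℓ.Prime) {r : ℕ} {s : Finset ℕ} {f : ℕ → ℚ}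
    (h : ∀ i ∈ s, ModDvd ℓ r (f i)) : ModDvd ℓ r (∑ i ∈ s, f i) := by
  classical
  induction s using Finset.induction with
  | empty => simpa using mdvd_zero hℓ r
  | @insert a s hx ih =>
    rw [Finset.sum_insert hx]
    exact mdvd_add hℓ (h a (Finset.mem_insert_self a s))
      (ih fun i hi => h i (Finset.mem_insert_of_mem hi))

lemma li_sum (hℓ : ℓ.Prime) {s : Finset ℕ} {f : ℕ → ℚ}
    (h : ∀ i ∈ s, IsLIntegral ℓ (f i)) : IsLIntegral ℓ (∑ i ∈ s, f i) := mdvd_sum hℓ h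

lemma li_pow (hℓ : ℓ.Prime) {x : ℚ} (hx : IsLIntegral ℓ x) (n : ℕ) :
    IsLIntegral ℓ (x ^ n) := by
  induction n with
  | zero => simpa using li_one hℓ
  | succ n ih => rw [pow_succ]; exact li_mul hℓ ih hx

lemma mdvd_cancel_pow (hℓ : ℓ.Prime) {V r : ℕ} {x : ℚ}
    (h : ModDvd ℓ (V + r) ((ℓ : ℚ) ^ V * x)) : ModDvd ℓ r x := by
  obtain ⟨z, d, hd, hdx⟩ := h
  refine ⟨z, d, hd, ?_⟩
  have hℓ0 : (ℓ : ℚ) ≠ 0 := by exact_mod_cast hℓ.ne_zero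
  have hpow : (ℓ : ℚ) ^ V ≠ 0 := pow_ne_zero _ hℓ0
  have : (ℓ:ℚ)^V * ((d:ℚ) * x) = (ℓ:ℚ)^V * ((ℓ:ℚ)^r * z) := by
    rw [pow_add] at hdx; linarith [hdx]
  exact mul_left_cancel₀ hpow this

lemma mdvd_of_int (hℓ : ℓ.Prime) (r : ℕ) (z : ℤ) : ModDvd ℓ r ((ℓ:ℚ)^r * z) :=
  ⟨z, 1, by simpa using (int_prime hℓ).not_dvd_one, by simp⟩

end Helpers

section Chunk2
open Polynomial
variable {ℓ : ℕ}

lemma approx (hℓ : ℓ.Prime) {u : ℚ} (hu : IsLIntegral ℓ u) (M : ℕ) :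
    ∃ n : ℕ, ModDvd ℓ M (u - n) := by
  obtain ⟨z, d, hd, hdu⟩ := hu
  rw [pow_zero, one_mul] at hdu
  have hcop : IsCoprime ((ℓ:ℤ)^M) d := (((int_prime hℓ).coprime_iff_not_dvd).mpr hd).pow_left
  obtain ⟨a, b, hab⟩ := hcop
  set n0 : ℤ := b * z with hn0
  have hpos : (0:ℤ) < (ℓ:ℤ)^M := pow_pos (by exact_mod_cast hℓ.pos) M
  refine ⟨(n0 % ((ℓ:ℤ)^M)).toNat, ?_⟩
  have htn : ((n0 % ((ℓ:ℤ)^M)).toNat : ℤ) = n0 % ((ℓ:ℤ)^M) :=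
    Int.toNat_of_nonneg (Int.emod_nonneg _ (ne_of_gt hpos))
  have hsplit : u - ((n0 % ((ℓ:ℤ)^M)).toNat : ℚ) = (u - (n0:ℚ)) + (((n0:ℚ)) - ((n0 % ((ℓ:ℤ)^M)).toNat : ℚ)) := by ring
  rw [hsplit]
  apply mdvd_add hℓ
  · refine ⟨a * z, d, hd, ?_⟩
    have hd0 : (d:ℚ) * (u - n0) = (ℓ:ℚ)^M * ((a * z : ℤ) : ℚ) := by
      have h1 : (d:ℚ) * (n0:ℚ) = ((d * n0 : ℤ) : ℚ) := by push_cast; ring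
      have h2 : d * n0 = z - (a * z) * (ℓ:ℤ)^M := by
        have : b * d = 1 - a * (ℓ:ℤ)^M := by linarith [hab]
        calc d * n0 = (b * d) * z := by rw [hn0]; ring
        _ = (1 - a * (ℓ:ℤ)^M) * z := by rw [this]
        _ = z - (a * z) * (ℓ:ℤ)^M := by ring
      calc (d:ℚ) * (u - n0) = (d:ℚ) * u - (d:ℚ) * n0 := by ring
      _ = (z:ℚ) - ((d * n0 : ℤ) : ℚ) := by rw [hdu, h1]
      _ = (z:ℚ) - (((z - (a * z) * (ℓ:ℤ)^M) : ℤ) : ℚ) := by rw [h2]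
      _ = (ℓ:ℚ)^M * ((a * z : ℤ) : ℚ) := by push_cast; ring
    exact hd0
  · have hmod : (n0:ℚ) - ((n0 % ((ℓ:ℤ)^M)).toNat : ℚ) = (ℓ:ℚ)^M * ((n0 / ((ℓ:ℤ)^M) : ℤ) : ℚ) := by
      have : n0 - n0 % ((ℓ:ℤ)^M) = (ℓ:ℤ)^M * (n0 / ((ℓ:ℤ)^M)) := by
        rw [Int.emod_def]; ring
      rw [show ((n0 % ((ℓ:ℤ)^M)).toNat : ℚ) = ((n0 % ((ℓ:ℤ)^M) : ℤ) : ℚ) from by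
        exact_mod_cast congrArg (fun t : ℤ => (t : ℚ)) htn]
      have h4 : ((n0:ℚ)) - ((n0 % ((ℓ:ℤ)^M) : ℤ):ℚ) = (((ℓ:ℤ)^M * (n0 / ((ℓ:ℤ)^M)) : ℤ) : ℚ) := by
        rw [← this]; push_cast; ring
      rw [h4]; push_cast; ring
    rw [hmod]
    exact mdvd_of_int hℓ M _

lemma exists_pow_li (hℓ : ℓ.Prime) (a : ℚ) : ∃ V : ℕ, IsLIntegral ℓ ((ℓ:ℚ)^V * a) := by
  refine ⟨(a.den).factorization ℓ, a.num, (ordCompl[ℓ] a.den : ℕ), ?_, ?_⟩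
  · rw [Int.natCast_dvd_natCast]
    exact Nat.not_dvd_ordCompl hℓ a.den_nz
  · rw [pow_zero, one_mul]
    have hden : (ℓ:ℚ) ^ (a.den).factorization ℓ * ((ordCompl[ℓ] a.den : ℕ) : ℚ) = (a.den : ℚ) := by
      rw [← Nat.cast_pow, ← Nat.cast_mul, Nat.ordProj_mul_ordCompl_eq_self]
    have hnum : (a.den : ℚ) * a = a.num := by
      have h := Rat.num_div_den a
      have hd0 : (a.den:ℚ) ≠ 0 := by exact_mod_cast a.den_nz
      calc (a.den:ℚ) * a = (a.den:ℚ) * ((a.num:ℚ) / (a.den:ℚ)) := by rw [h]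
      _ = a.num := by field_simp
    calc ((ordCompl[ℓ] a.den : ℕ) : ℚ) * ((ℓ:ℚ)^((a.den).factorization ℓ) * a)
        = ((ℓ:ℚ) ^ (a.den).factorization ℓ * ((ordCompl[ℓ] a.den : ℕ) : ℚ)) * a := by ring
      _ = (a.den : ℚ) * a := by rw [hden]
      _ = a.num := hnum

lemma li_pow_mul_mono (hℓ : ℓ.Prime) {a : ℚ} {V W : ℕ}
    (hW : IsLIntegral ℓ ((ℓ:ℚ)^W * a)) (h : W ≤ V) : IsLIntegral ℓ ((ℓ:ℚ)^V * a) := by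
  have : (ℓ:ℚ)^V * a = (ℓ:ℚ)^(V-W) * ((ℓ:ℚ)^W * a) := by
    rw [← mul_assoc, ← pow_add]; congr 2; omega
  rw [this]
  exact li_mul hℓ (li_pow hℓ (li_natCast hℓ ℓ) _) hW

lemma exists_pow_li_poly (hℓ : ℓ.Prime) (ψ : Polynomial ℚ) :
    ∃ V, ∀ j, IsLIntegral ℓ ((ℓ:ℚ)^V * ψ.coeff j) := by
  choose f hf using exists_pow_li hℓ
  refine ⟨(Finset.range (ψ.natDegree + 1)).sup (fun j => f (ψ.coeff j)), fun j => ?_⟩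
  by_cases hj : j ≤ ψ.natDegree
  · exact li_pow_mul_mono hℓ (hf _) (Finset.le_sup (f := fun j => f (ψ.coeff j)) (Finset.mem_range.mpr (Nat.lt_succ_of_le hj)))
  · rw [ψ.coeff_eq_zero_of_natDegree_lt (by omega), mul_zero]
    exact li_zero hℓ

lemma mdvd_pow_sub_pow (hℓ : ℓ.Prime) {M : ℕ} {u v : ℚ} (hu : IsLIntegral ℓ u)
    (hv : IsLIntegral ℓ v) (h : ModDvd ℓ M (u - v)) (n : ℕ) :
    ModDvd ℓ M (u^n - v^n) := by
  rw [← geom_sum₂_mul u v n, mul_comm]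
  exact mdvd_mul_li hℓ h (li_sum hℓ fun i _ => li_mul hℓ (li_pow hℓ hu i) (li_pow hℓ hv _))

lemma eval_sub_cont (hℓ : ℓ.Prime) {M : ℕ} (ψ : Polynomial ℚ)
    (hc : ∀ j, IsLIntegral ℓ (ψ.coeff j)) {u v : ℚ} (hu : IsLIntegral ℓ u)
    (hv : IsLIntegral ℓ v) (h : ModDvd ℓ M (u - v)) :
    ModDvd ℓ M (ψ.eval u - ψ.eval v) := by
  rw [Polynomial.eval_eq_sum_range, Polynomial.eval_eq_sum_range, ← Finset.sum_sub_distrib]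
  apply mdvd_sum hℓ
  intro i _
  have he : ψ.coeff i * u ^ i - ψ.coeff i * v ^ i = (u^i - v^i) * ψ.coeff i := by ring
  rw [he]
  exact mdvd_mul_li hℓ (mdvd_pow_sub_pow hℓ hu hv h i) (hc i)

lemma eval_cont (hℓ : ℓ.Prime) (ψ : Polynomial ℚ) :
    ∃ V : ℕ, ∀ (r : ℕ) (u v : ℚ), IsLIntegral ℓ u → IsLIntegral ℓ v →
      ModDvd ℓ (V + r) (u - v) → ModDvd ℓ r (ψ.eval u - ψ.eval v) := by
  obtain ⟨V, hV⟩ := exists_pow_li_poly hℓ ψ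
  refine ⟨V, fun r u v hu hv h => ?_⟩
  apply mdvd_cancel_pow hℓ (V := V)
  have he : (ℓ:ℚ)^V * (ψ.eval u - ψ.eval v)
      = (Polynomial.C ((ℓ:ℚ)^V) * ψ).eval u - (Polynomial.C ((ℓ:ℚ)^V) * ψ).eval v := by
    simp only [Polynomial.eval_mul, Polynomial.eval_C, mul_sub]
  rw [he]
  exact eval_sub_cont hℓ _ (fun j => by rw [Polynomial.coeff_C_mul]; exact hV j) hu hv h

end Chunk2

noncomputable section Chunk3
open Polynomial

def qchoosePoly (k : ℕ) : Polynomial ℚ :=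
  Polynomial.C ((k.factorial : ℚ)⁻¹) * ∏ i ∈ Finset.range k, (Polynomial.X - Polynomial.C (i:ℚ))

lemma qchoosePoly_eval (α : ℚ) (k : ℕ) : (qchoosePoly k).eval α = qchoose α k := by
  rw [qchoosePoly, qchoose, Polynomial.eval_mul, Polynomial.eval_C, Polynomial.eval_prod,
    div_eq_inv_mul]
  congr 1
  exact Finset.prod_congr rfl fun i _ => by simp

def oneSubPowP (m : ℕ) : PowerSeries (Polynomial ℚ) :=
  PowerSeries.mk fun k => if m ∣ k then (-1) ^ (k / m) * qchoosePoly (k / m) else 0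

lemma map_oneSubPowP (α : ℚ) (m : ℕ) :
    PowerSeries.map (Polynomial.evalRingHom α) (oneSubPowP m) = oneSubPow α m := by
  ext k
  simp only [PowerSeries.coeff_map, oneSubPowP, oneSubPow, PowerSeries.coeff_mk]
  split
  · simp [qchoosePoly_eval]
  · simp

def phiPoly (N m : ℕ) : Polynomial ℚ :=
  PowerSeries.coeff N (∏ n ∈ Finset.range (N + 1), oneSubPowP (m * (n + 1)))

lemma phiPoly_eval (N m : ℕ) (α : ℚ) :
    (phiPoly N m).eval α = PowerSeries.coeff N (etaPow α m) := by
  simp only [etaPow, PowerSeries.coeff_mk]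
  rw [show (∏ n ∈ Finset.range (N + 1), oneSubPow α (m * (n + 1)))
      = PowerSeries.map (Polynomial.evalRingHom α)
          (∏ n ∈ Finset.range (N + 1), oneSubPowP (m * (n + 1))) from by
    rw [map_prod]; exact Finset.prod_congr rfl fun n _ => (map_oneSubPowP α _).symm]
  rw [PowerSeries.coeff_map]
  rfl

lemma qchoose_zero_right (α : ℚ) : qchoose α 0 = 1 := by simp [qchoose]

lemma qchoose_zero_left (k : ℕ) (hk : k ≠ 0) : qchoose 0 k = 0 := by
  unfold qchoose
  rw [Finset.prod_eq_zero (Finset.mem_range.mpr (Nat.pos_of_ne_zero hk)) (by simp)]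
  simp

lemma qchoose_succ_succ (α : ℚ) (k : ℕ) :
    qchoose (α + 1) (k + 1) = qchoose α (k + 1) + qchoose α k := by
  unfold qchoose
  rw [Finset.prod_range_succ' (fun i => α + 1 - (i : ℚ)) k]
  have h1 : ∏ i ∈ Finset.range k, (α + 1 - (((i + 1 : ℕ)) : ℚ)) = ∏ i ∈ Finset.range k, (α - i) :=
    Finset.prod_congr rfl fun i _ => by push_cast; ring
  rw [h1, Finset.prod_range_succ (fun i => α - (i : ℚ)) k]
  have h2 : ((k + 1).factorial : ℚ) ≠ 0 := Nat.cast_ne_zero.mpr (k + 1).factorial_ne_zero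
  have h3 : ((k).factorial : ℚ) ≠ 0 := Nat.cast_ne_zero.mpr k.factorial_ne_zero
  rw [Nat.factorial_succ]
  field_simp
  push_cast
  ring

lemma oneSubPow_zero (m : ℕ) (hm : 0 < m) : oneSubPow 0 m = 1 := by
  ext k
  rw [oneSubPow, PowerSeries.coeff_mk, PowerSeries.coeff_one]
  rcases Nat.eq_zero_or_pos k with rfl | hk
  · simp [qchoose_zero_right]
  · have hne : k ≠ 0 := hk.ne'
    rw [if_neg hne]
    split
    · rename_i hdvd
      have hkm : k / m ≠ 0 := by
        have h6 := Nat.one_le_div_iff hm |>.mpr (Nat.le_of_dvd hk hdvd)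
        omega
      rw [qchoose_zero_left _ hkm, mul_zero]
    · rfl

lemma oneSubPow_succ (α : ℚ) (m : ℕ) (hm : 0 < m) :
    oneSubPow (α + 1) m = oneSubPow α m * (1 - PowerSeries.X ^ m) := by
  ext k
  rw [mul_sub, mul_one, map_sub, PowerSeries.coeff_mul_X_pow']
  simp only [oneSubPow, PowerSeries.coeff_mk]
  by_cases hdvd : m ∣ k
  · rcases Nat.eq_zero_or_pos k with rfl | hk
    · rw [if_pos (dvd_zero m), if_pos (dvd_zero m), if_neg (by omega : ¬ m ≤ 0)]
      simp [qchoose_zero_right]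
    · have hmk : m ≤ k := Nat.le_of_dvd hk hdvd
      have hdvd' : m ∣ (k - m) := Nat.dvd_sub hdvd dvd_rfl
      rw [if_pos hdvd, if_pos hdvd, if_pos hmk, if_pos hdvd']
      obtain ⟨t, rfl⟩ := hdvd
      obtain ⟨s, rfl⟩ : ∃ s, t = s + 1 := by
        refine ⟨t - 1, ?_⟩
        rcases Nat.eq_zero_or_pos t with rfl | ht
        · simp at hk
        · omega
      have e1 : m * (s + 1) / m = s + 1 := Nat.mul_div_cancel_left _ hm
      have e2 : (m * (s + 1) - m) / m = s := by
        rw [show m * (s + 1) - m = m * s from by rw [Nat.mul_succ]; omega]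
        exact Nat.mul_div_cancel_left _ hm
      rw [e1, e2, qchoose_succ_succ, pow_succ]
      ring
  · rw [if_neg hdvd, if_neg hdvd]
    split
    · rename_i hmk
      rw [if_neg fun hc : m ∣ k - m => hdvd (by
        have h5 := Nat.dvd_add hc (dvd_refl m)
        rwa [Nat.sub_add_cancel hmk] at h5)]
      ring
    · ring

lemma oneSubPow_nat (a m : ℕ) (hm : 0 < m) :
    oneSubPow (a : ℚ) m = (1 - PowerSeries.X ^ m) ^ a := by
  induction a with
  | zero => simpa using oneSubPow_zero m hm
  | succ a ih =>
    have : ((a + 1 : ℕ) : ℚ) = (a : ℚ) + 1 := by push_cast [Nat.cast_succ]; ring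
    rw [this, oneSubPow_succ _ m hm, ih, pow_succ]

end Chunk3

noncomputable section Chunk4
open Polynomial
variable {ℓ : ℕ}

def gZ : Polynomial ℤ →+* PowerSeries ℚ :=
  (PowerSeries.map (Int.castRingHom ℚ)).comp (Polynomial.coeToPowerSeries.ringHom)

lemma gZ_coeff (f : Polynomial ℤ) (N : ℕ) :
    PowerSeries.coeff N (gZ f) = ((f.coeff N : ℤ) : ℚ) := by
  simp [gZ, PowerSeries.coeff_map, Polynomial.coeff_coe]

lemma gZ_one_sub_X_pow (j : ℕ) : gZ (1 - Polynomial.X ^ j) = 1 - PowerSeries.X ^ j := by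
  simp only [gZ, RingHom.comp_apply, map_sub, map_one, map_pow,
    Polynomial.coeToPowerSeries.ringHom_apply, Polynomial.coe_X, PowerSeries.map_X]

def PZ (N m : ℕ) : Polynomial ℤ :=
  ∏ n ∈ Finset.range (N + 1), (1 - Polynomial.X ^ (m * (n + 1)))

lemma etaPow_nat_coeff (a m N : ℕ) (hm : 0 < m) :
    PowerSeries.coeff N (etaPow (a : ℚ) m) = (((PZ N m ^ a).coeff N : ℤ) : ℚ) := by
  rw [← gZ_coeff]
  simp only [etaPow, PowerSeries.coeff_mk]
  congr 1
  rw [map_pow, PZ, map_prod, ← Finset.prod_pow]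
  exact Finset.prod_congr rfl fun n _ => by
    rw [gZ_one_sub_X_pow, ← oneSubPow_nat a _ (by positivity)]

lemma key_int (hℓ : ℓ.Prime) (N : ℕ) :
    (Polynomial.C (ℓ : ℤ)) ∣ (PZ N 1) ^ ℓ - PZ N ℓ := by
  haveI : Fact ℓ.Prime := ⟨hℓ⟩
  rw [Polynomial.C_dvd_iff_dvd_coeff]
  intro i
  have hmap : ((PZ N 1) ^ ℓ - PZ N ℓ).map (Int.castRingHom (ZMod ℓ)) = 0 := by
    rw [Polynomial.map_sub, Polynomial.map_pow, PZ, PZ, Polynomial.map_prod,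
      Polynomial.map_prod]
    simp only [Polynomial.map_sub, Polynomial.map_one, Polynomial.map_pow, Polynomial.map_X]
    rw [← Finset.prod_pow, sub_eq_zero]
    refine Finset.prod_congr rfl fun n _ => ?_
    rw [sub_pow_char (p := ℓ), one_pow, ← pow_mul, one_mul, mul_comm]
  have h7 := Polynomial.ext_iff.mp hmap i
  rw [Polynomial.coeff_map, Polynomial.coeff_zero] at h7
  have h8 : ((((PZ N 1) ^ ℓ - PZ N ℓ).coeff i : ℤ) : ZMod ℓ) = 0 := by exact_mod_cast h7
  exact (ZMod.intCast_zmod_eq_zero_iff_dvd _ ℓ).mp h8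

lemma key_int2 (hℓ : ℓ.Prime) (N a r : ℕ) (hr : 1 ≤ r) :
    ((ℓ : ℤ) ^ r) ∣ (PZ N 1 ^ (ℓ ^ r * a)).coeff N - (PZ N ℓ ^ (ℓ ^ (r - 1) * a)).coeff N := by
  have h0 : ((ℓ : ℕ) : Polynomial ℤ) ∣ (PZ N 1) ^ ℓ - PZ N ℓ := by
    have := key_int hℓ N
    rwa [show (Polynomial.C (ℓ : ℤ)) = ((ℓ : ℕ) : Polynomial ℤ) from by rfl] at this
  have h1 := dvd_sub_pow_of_dvd_sub (R := Polynomial ℤ) h0 (r - 1)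
  rw [← pow_mul] at h1
  have hrr : (r - 1) + 1 = r := by omega
  have hmul : ℓ * ℓ ^ (r - 1) = ℓ ^ r := by
    rw [← pow_succ']
    congr 1
  rw [hrr, hmul] at h1
  have h2 : ((ℓ : Polynomial ℤ)) ^ r ∣ PZ N 1 ^ (ℓ ^ r * a) - PZ N ℓ ^ (ℓ ^ (r - 1) * a) := by
    refine dvd_trans h1 ?_
    rw [pow_mul, pow_mul]
    exact sub_dvd_pow_sub_pow _ _ a
  have h3 : (Polynomial.C ((ℓ : ℤ) ^ r)) = ((ℓ : Polynomial ℤ)) ^ r := by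
    rw [map_pow, Polynomial.C_eq_natCast]
  rw [← h3] at h2
  have h4 := (Polynomial.C_dvd_iff_dvd_coeff _ _).mp h2 N
  simpa using h4

end Chunk4

theorem stmt0_aux (ℓ : ℕ) (hℓ : ℓ.Prime) (u : ℚ) (hu : IsLIntegral ℓ u)
    (r : ℕ) (hr : 1 ≤ r) :
    ∀ N : ℕ, ModDvd ℓ r (PowerSeries.coeff N
      (etaPow ((ℓ:ℚ)^r * u) 1 - etaPow ((ℓ:ℚ)^(r-1) * u) ℓ)) := by
  intro N
  rw [map_sub]
  set ψ : Polynomial ℚ := (phiPoly N 1).comp (Polynomial.C ((ℓ:ℚ)^r) * Polynomial.X)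
      - (phiPoly N ℓ).comp (Polynomial.C ((ℓ:ℚ)^(r-1)) * Polynomial.X) with hψdef
  have hψ : ∀ x : ℚ, ψ.eval x
      = PowerSeries.coeff N (etaPow ((ℓ:ℚ)^r * x) 1)
        - PowerSeries.coeff N (etaPow ((ℓ:ℚ)^(r-1) * x) ℓ) := by
    intro x
    rw [hψdef, Polynomial.eval_sub, Polynomial.eval_comp, Polynomial.eval_comp]
    simp only [Polynomial.eval_mul, Polynomial.eval_C, Polynomial.eval_X]
    rw [phiPoly_eval, phiPoly_eval]
  rw [← hψ u]
  obtain ⟨V, hV⟩ := eval_cont hℓ ψ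
  obtain ⟨n, hn⟩ := approx hℓ hu (V + r)
  have h1 : ModDvd ℓ r (ψ.eval u - ψ.eval (n:ℚ)) := hV r u n hu (li_natCast hℓ n) hn
  have h2 : ModDvd ℓ r (ψ.eval (n:ℚ)) := by
    rw [hψ (n:ℚ)]
    have e1 : (ℓ:ℚ)^r * (n:ℚ) = ((ℓ^r * n : ℕ) : ℚ) := by push_cast; ring
    have e2 : (ℓ:ℚ)^(r-1) * (n:ℚ) = ((ℓ^(r-1) * n : ℕ) : ℚ) := by push_cast; ring
    rw [e1, e2, etaPow_nat_coeff _ 1 N one_pos, etaPow_nat_coeff _ ℓ N hℓ.pos]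
    obtain ⟨z, hz⟩ := key_int2 hℓ N n r hr
    rw [show (((PZ N 1 ^ (ℓ^r * n)).coeff N : ℤ):ℚ)
          - (((PZ N ℓ ^ (ℓ^(r-1) * n)).coeff N : ℤ):ℚ) = (ℓ:ℚ)^r * (z:ℚ) from by
      exact_mod_cast congrArg (fun t : ℤ => (t : ℚ)) hz]
    exact mdvd_of_int hℓ r z
  have h9 := mdvd_add hℓ h1 h2
  rwa [sub_add_cancel] at h9

/-- for a prime `ℓ` and `ℓ`-integral `u`,
`(∏(1-q^n))^{ℓ^r u} ≡ (∏(1-q^{ℓ n}))^{ℓ^{r-1} u} (mod ℓ^r)`. -/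
theorem stmt0 (ℓ : ℕ) (hℓ : ℓ.Prime) (u : ℚ) (hu : IsLIntegral ℓ u)
    (r : ℕ) (hr : 1 ≤ r) :
    SeriesCong ℓ r (etaPow ((ℓ : ℚ) ^ r * u) 1) (etaPow ((ℓ : ℚ) ^ (r - 1) * u) ℓ) := by
  exact fun N => stmt0_aux ℓ hℓ u hu r hr N
end

section
/- Let α = a/b ∈ Q in lowest terms, and suppose α is not an even integer in the interval [-14, 26]. Let ℓ ≥ 5 be a prime with ℓ ∤ b such that there exist an integer k with 1 ≤ k < ℓ, m ∈ {4,6,8,10,14}, and c ∈ Z with 12k - m = c(ℓ-1), and such that b(24k - α) ≡ 0 in Z_(ℓ) modulo ℓ (i.e. ℓ divides 24kb - a). Then ℓ ≤ max{|26b - a|, |14b + a|}. -/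
/-- let `α = a/b` in lowest terms, not an even integer in `[-14, 26]`.
If `ℓ ≥ 5` is prime, `ℓ ∤ b`, `12k - m = c(ℓ-1)` for some `1 ≤ k < ℓ`,
`m ∈ {4, 6, 8, 10, 14}`, `c ∈ ℤ`, and `ℓ ∣ 24kb - a`, then
`ℓ ≤ max {|26b - a|, |14b + a|}`. -/
theorem stmt9 (a b : ℤ) (hb : 1 ≤ b) (hab : IsCoprime a b)
    (hα : ¬ ∃ t : ℤ, Even t ∧ -14 ≤ t ∧ t ≤ 26 ∧ (a : ℚ) / (b : ℚ) = (t : ℚ))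
    (ℓ : ℕ) (hℓ : ℓ.Prime) (hℓ5 : 5 ≤ ℓ) (hℓb : ¬ (ℓ : ℤ) ∣ b)
    (k : ℕ) (hk1 : 1 ≤ k) (hkℓ : k < ℓ) (m : ℕ)
    (hm : m ∈ ({4, 6, 8, 10, 14} : Finset ℕ)) (c : ℤ)
    (heq : 12 * (k : ℤ) - (m : ℤ) = c * ((ℓ : ℤ) - 1))
    (hdvd : (ℓ : ℤ) ∣ 24 * (k : ℤ) * b - a) :
    (ℓ : ℤ) ≤ max |26 * b - a| |14 * b + a| := by
  have hL5 : (5 : ℤ) ≤ (ℓ : ℤ) := by exact_mod_cast hℓ5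
  have hk1' : (1 : ℤ) ≤ (k : ℤ) := by exact_mod_cast hk1
  have hkℓ' : (k : ℤ) < (ℓ : ℤ) := by exact_mod_cast hkℓ
  have hm' : m = 4 ∨ m = 6 ∨ m = 8 ∨ m = 10 ∨ m = 14 := by
    simpa using hm
  have hmZ : (m : ℤ) = 4 ∨ (m : ℤ) = 6 ∨ (m : ℤ) = 8 ∨ (m : ℤ) = 10 ∨ (m : ℤ) = 14 := by
    rcases hm' with h | h | h | h | h <;> simp [h]
  -- bounds on c
  have hc1 : 1 ≤ c := by
    by_contra h
    push_neg at h
    have hc0 : c = 0 ∨ c ≤ -1 := by omega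
    rcases hc0 with rfl | hc
    · simp only [zero_mul] at heq
      rcases hm' with h' | h' | h' | h' | h' <;> omega
    · have hmul : c * ((ℓ : ℤ) - 1) ≤ -1 * ((ℓ : ℤ) - 1) :=
        mul_le_mul_of_nonneg_right hc (by linarith)
      rcases hmZ with h' | h' | h' | h' | h' <;> nlinarith
  have hc11 : c ≤ 11 := by
    by_contra h
    push_neg at h
    rcases hmZ with h' | h' | h' | h' | h' <;> nlinarith
  -- the key quantity
  set d : ℤ := 2 * ((m : ℤ) - c) * b - a with hd
  have hdvd' : (ℓ : ℤ) ∣ d := by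
    have : d = (24 * (k : ℤ) * b - a) - (ℓ : ℤ) * (2 * c * b) := by
      rw [hd]; nlinarith [heq]
    rw [this]
    exact dvd_sub hdvd (Dvd.intro _ rfl)
  have hlo : -14 ≤ 2 * ((m : ℤ) - c) := by
    rcases hmZ with h' | h' | h' | h' | h' <;> omega
  have hhi : 2 * ((m : ℤ) - c) ≤ 26 := by
    rcases hmZ with h' | h' | h' | h' | h' <;> omega
  have hdne : d ≠ 0 := by
    intro h0
    apply hα
    refine ⟨2 * ((m : ℤ) - c), ⟨(m : ℤ) - c, by ring⟩, hlo, hhi, ?_⟩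
    have hbQ : (b : ℚ) ≠ 0 := by
      have : (0 : ℤ) < b := hb
      exact_mod_cast this.ne'
    have ha : a = 2 * ((m : ℤ) - c) * b := by omega
    rw [ha]
    push_cast
    field_simp
  have hLd : (ℓ : ℤ) ≤ |d| := Int.le_of_dvd (abs_pos.mpr hdne) ((dvd_abs _ _).mpr hdvd')
  refine hLd.trans ?_
  rw [abs_le']
  constructor
  · refine le_trans ?_ (le_max_left _ _)
    have : d ≤ 26 * b - a := by rw [hd]; nlinarith
    exact this.trans (le_abs_self _)
  · refine le_trans ?_ (le_max_right _ _)
    have : -d ≤ 14 * b + a := by rw [hd]; nlinarith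
    exact this.trans (le_abs_self _)
end
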